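/- arXiv:1701.06610 — 3 statements merged into one kernel-verified Lean document; each statement's English description precedes it below -/
import Mathlib

section
/- Let W : X → P(Y) be a channel with finite input set X and finite output set Y, and P a probability mass function on X. For α ∈ (0,1), define the conditional Rényi divergence D_α(W‖Q|P) := Σ_x P(x) D_α(W(x)‖Q). Then there exists a probability mass function Q* on Y minimizing D_α(W‖Q|P) over all probability mass functions Q on Y; i.e., the Augustin information I_α(P; W) := inf_Q D_α(W‖Q|P) is attained. -/
open scoped BigOperators

/-- A probability mass function on a finite type. -/
def IsPMF {Y : Type*} [Fintype Y] (Q : Y → ℝ) : Prop :=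
  (∀ y, 0 ≤ Q y) ∧ ∑ y, Q y = 1

/-- The power sum appearing in the Rényi divergence; since `(0:ℝ) ^ (1-α) = 0` for `1-α > 0`,
the sum automatically restricts to `y` with `Q y > 0`. -/
noncomputable def rSum {Y : Type*} [Fintype Y] (α : ℝ) (W Q : Y → ℝ) : ℝ :=
  ∑ y, W y ^ α * Q y ^ (1 - α)

/-- Order-`α` Rényi divergence (for `α ∈ (0,1)`), valued in `EReal`, with the convention
that it is `⊤` when the power sum vanishes. -/
noncomputable def rDiv {Y : Type*} [Fintype Y] (α : ℝ) (W Q : Y → ℝ) : EReal :=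
  if rSum α W Q = 0 then ⊤
  else (((1 / (α - 1)) * Real.log (rSum α W Q) : ℝ) : EReal)

/-- Kullback–Leibler divergence, valued in `EReal`, `⊤` unless `W ≪ Q`. -/
noncomputable def kDiv {Y : Type*} [Fintype Y] (W Q : Y → ℝ) : EReal :=
  if ∀ y, Q y = 0 → W y = 0 then
    (((∑ y, if W y = 0 then 0 else W y * Real.log (W y / Q y)) : ℝ) : EReal)
  else ⊤

/-- Order-`α` divergence for `α ∈ (0,1]`: Rényi for `α ≠ 1`, KL for `α = 1`. -/
noncomputable def dA {Y : Type*} [Fintype Y] (α : ℝ) (W Q : Y → ℝ) : EReal :=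
  if α = 1 then kDiv W Q else rDiv α W Q

/-- Conditional divergence `D_α(W‖Q|P) = ∑_x P(x) D_α(W(x)‖Q)`. -/
noncomputable def cDiv {X Y : Type*} [Fintype X] [Fintype Y]
    (α : ℝ) (W : X → Y → ℝ) (Q : Y → ℝ) (P : X → ℝ) : EReal :=
  ∑ x, (P x : EReal) * dA α (W x) Q

/-- Augustin information `I_α(P;W) = inf_Q D_α(W‖Q|P)`. -/
noncomputable def aInfo {X Y : Type*} [Fintype X] [Fintype Y]
    (α : ℝ) (P : X → ℝ) (W : X → Y → ℝ) : EReal :=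
  ⨅ Q ∈ {Q : Y → ℝ | IsPMF Q}, cDiv α W Q P

/-!
For `α < 1` the power sum `Q ↦ ∑_y W(y)^α Q(y)^(1-α)` is continuous on `ℝ^Y`, and
`t ↦ log t / (α - 1)`, extended by `+∞` at `t = 0`, is continuous from `[0, ∞)` to `EReal`
because `1 / (α - 1) < 0`. Hence every summand of `D_α(W‖Q|P)` is a continuous function of `Q`
with values in `(-∞, +∞]`, where addition is continuous, so `Q ↦ D_α(W‖Q|P)` is continuous and
attains its minimum on the compact standard simplex.
-/

open Filter Topology

noncomputable def mulLogOrTop (c t : ℝ) : EReal :=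
  if t = 0 then ⊤ else ((c * Real.log t : ℝ) : EReal)

lemma mulLogOrTop_ne_bot (c t : ℝ) : mulLogOrTop c t ≠ ⊥ := by
  unfold mulLogOrTop
  split
  · exact top_ne_bot
  · exact EReal.coe_ne_bot _

lemma coe_mul_mulLogOrTop {p : ℝ} (hp : 0 < p) (c t : ℝ) :
    (p : EReal) * mulLogOrTop c t = mulLogOrTop (p * c) t := by
  unfold mulLogOrTop
  split
  · exact EReal.coe_mul_top_of_pos hp
  · rw [← EReal.coe_mul, mul_assoc]

lemma continuous_mulLogOrTop {c : ℝ} (hc : c < 0) : Continuous (mulLogOrTop c) := by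
  refine continuous_iff_continuousAt.2 fun t => ?_
  by_cases ht : t = 0
  · subst ht
    refine continuousWithinAt_compl_self.1 ?_
    rw [ContinuousWithinAt, show mulLogOrTop c 0 = ⊤ from if_pos rfl]
    have hlog : Tendsto (fun s => c * Real.log s) (𝓝[≠] 0) atTop :=
      Real.tendsto_log_nhdsNE_zero.const_mul_atBot_of_neg hc
    refine (EReal.tendsto_coe_nhds_top_iff.2 hlog).congr' ?_
    filter_upwards [self_mem_nhdsWithin] with s (hs : s ≠ 0)
    rw [mulLogOrTop, if_neg hs]
  · have hcoe : ContinuousAt (fun s => ((c * Real.log s : ℝ) : EReal)) t :=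
      continuous_coe_real_ereal.continuousAt.comp
        (continuousAt_const.mul (Real.continuousAt_log ht))
    refine hcoe.congr ?_
    filter_upwards [eventually_ne_nhds ht] with s hs
    rw [mulLogOrTop, if_neg hs]

lemma continuous_rSum {Y : Type*} [Fintype Y] {α : ℝ} (hα : α ≤ 1) (W : Y → ℝ) :
    Continuous (rSum α W) :=
  continuous_finsetSum _ fun y _ => continuous_const.mul
    ((Real.continuous_rpow_const (by linarith)).comp (continuous_apply y))

lemma dA_eq_mulLogOrTop {Y : Type*} [Fintype Y] {α : ℝ} (hα : α ≠ 1) (W Q : Y → ℝ) :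
    dA α W Q = mulLogOrTop (1 / (α - 1)) (rSum α W Q) := by
  simp [dA, rDiv, mulLogOrTop, hα]

/-- Addition on `EReal` is continuous away from `⊥ + ⊤`. -/
lemma EReal.continuous_finset_sum_of_ne_bot {ι β : Type*} [TopologicalSpace β] (s : Finset ι)
    {f : ι → β → EReal} (hf : ∀ i ∈ s, Continuous (f i)) (hbot : ∀ i ∈ s, ∀ b, f i b ≠ ⊥) :
    Continuous (fun b => ∑ i ∈ s, f i b) ∧ ∀ b, ∑ i ∈ s, f i b ≠ ⊥ := by
  classical
  induction s using Finset.induction_on with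
  | empty => simp [continuous_const]
  | @insert a s ha ih =>
    obtain ⟨ih_cont, ih_bot⟩ := ih (fun i hi => hf i (Finset.mem_insert_of_mem hi))
      (fun i hi => hbot i (Finset.mem_insert_of_mem hi))
    have ha_cont := hf a (Finset.mem_insert_self a s)
    have ha_bot := hbot a (Finset.mem_insert_self a s)
    simp only [Finset.sum_insert ha]
    refine ⟨continuous_iff_continuousAt.2 fun b => ?_, fun b => ?_⟩
    · exact (EReal.continuousAt_add (Or.inr (ih_bot b)) (Or.inl (ha_bot b))).comp
        (ha_cont.prodMk ih_cont).continuousAt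
    · simp [EReal.add_eq_bot_iff, ha_bot b, ih_bot b]

lemma continuous_coe_mul_dA {Y : Type*} [Fintype Y] {α : ℝ} (hα : α < 1) {p : ℝ} (hp : 0 ≤ p)
    (W : Y → ℝ) :
    Continuous (fun Q => (p : EReal) * dA α W Q) ∧ ∀ Q, (p : EReal) * dA α W Q ≠ ⊥ := by
  rcases hp.eq_or_lt with rfl | hp
  · simp [continuous_const]
  have hterm : ∀ Q, (p : EReal) * dA α W Q = mulLogOrTop (p * (1 / (α - 1))) (rSum α W Q) := by
    intro Q
    rw [dA_eq_mulLogOrTop hα.ne, coe_mul_mulLogOrTop hp]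
  have hc : p * (1 / (α - 1)) < 0 :=
    mul_neg_of_pos_of_neg hp (one_div_neg.2 (sub_neg.2 hα))
  simp only [hterm]
  exact ⟨(continuous_mulLogOrTop hc).comp (continuous_rSum hα.le W),
    fun Q => mulLogOrTop_ne_bot _ _⟩

lemma continuous_cDiv {X Y : Type*} [Fintype X] [Fintype Y] {α : ℝ} (hα : α < 1)
    (W : X → Y → ℝ) {P : X → ℝ} (hP : ∀ x, 0 ≤ P x) :
    Continuous (fun Q => cDiv α W Q P) :=
  (EReal.continuous_finset_sum_of_ne_bot _
    (fun x _ => (continuous_coe_mul_dA hα (hP x) (W x)).1)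
    (fun x _ => (continuous_coe_mul_dA hα (hP x) (W x)).2)).1

theorem augustin_information_attained_general {X Y : Type*} [Fintype X] [Fintype Y]
    [Nonempty Y]
    (α : ℝ) (hα : α ∈ Set.Ioo (0 : ℝ) 1)
    (W : X → Y → ℝ) (P : X → ℝ) (hP : IsPMF P) :
    ∃ Qstar : Y → ℝ, IsPMF Qstar ∧
      ∀ Q : Y → ℝ, IsPMF Q → cDiv α W Qstar P ≤ cDiv α W Q P := by
  obtain ⟨Qstar, hQstar, hmin⟩ := (isCompact_stdSimplex ℝ Y).exists_isMinOn
    (Set.nonempty_coe_sort.1 inferInstance) (continuous_cDiv hα.2 W hP.1).continuousOn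
  exact ⟨Qstar, hQstar, fun Q hQ => hmin hQ⟩

/-- the Augustin information is attained by some pmf `Q*`. -/
theorem augustin_information_attained {X Y : Type*} [Fintype X] [Fintype Y]
    [Nonempty X] [Nonempty Y]
    (α : ℝ) (hα : α ∈ Set.Ioo (0 : ℝ) 1)
    (W : X → Y → ℝ) (hW : ∀ x, IsPMF (W x)) (P : X → ℝ) (hP : IsPMF P) :
    ∃ Qstar : Y → ℝ, IsPMF Qstar ∧
      ∀ Q : Y → ℝ, IsPMF Q → cDiv α W Qstar P ≤ cDiv α W Q P :=
  augustin_information_attained_general α hα W P hP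
end

section
/- Let W : X → P(Y) be a channel with finite X and Y, P a probability mass function on X with full support on X, α ∈ (0,1), and suppose every output y ∈ Y satisfies W(x)(y) > 0 for some x with P(x) > 0. If Q₁ and Q₂ are both strictly positive probability mass functions on Y achieving the minimum of D_α(W‖Q|P) := Σ_x P(x) D_α(W(x)‖Q) over strictly positive Q, then Q₁ = Q₂ (uniqueness of the Augustin mean). -/
open scoped BigOperators

/-! For `α ∈ (0,1)` each power sum `Q ↦ ∑_y W(x)(y)^α Q(y)^(1-α)` is concave in `Q`, so its
logarithm is concave and, as `1/(α-1) < 0`, the objective `D_α(W‖Q|P)` is convex on strictly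
positive PMFs. If `Q₁ y ≠ Q₂ y` then some `x` with `P x > 0` has `W x y > 0`; there the strict
concavity of `t ↦ t^(1-α)` makes the convexity strict, and a strictly convex function has at most
one minimizer. -/

open Real Finset

section PowerSum

variable {α a b : ℝ}

lemma mul_rpow_combo_le (hα : α ∈ Set.Icc (0 : ℝ) 1) {w q₁ q₂ : ℝ} (hw : 0 ≤ w)
    (hq₁ : 0 ≤ q₁) (hq₂ : 0 ≤ q₂) (ha : 0 ≤ a) (hb : 0 ≤ b) (hab : a + b = 1) :
    a * (w ^ α * q₁ ^ (1 - α)) + b * (w ^ α * q₂ ^ (1 - α)) ≤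
      w ^ α * (a * q₁ + b * q₂) ^ (1 - α) := by
  have hconc := (concaveOn_rpow (p := 1 - α) (by linarith [hα.2]) (by linarith [hα.1])).2
    (Set.mem_Ici.2 hq₁) (Set.mem_Ici.2 hq₂) ha hb hab
  simp only [smul_eq_mul] at hconc
  calc a * (w ^ α * q₁ ^ (1 - α)) + b * (w ^ α * q₂ ^ (1 - α))
      = w ^ α * (a * q₁ ^ (1 - α) + b * q₂ ^ (1 - α)) := by ring
    _ ≤ w ^ α * (a * q₁ + b * q₂) ^ (1 - α) := by gcongr

lemma mul_rpow_combo_lt (hα : α ∈ Set.Ioo (0 : ℝ) 1) {w q₁ q₂ : ℝ} (hw : 0 < w)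
    (hq₁ : 0 ≤ q₁) (hq₂ : 0 ≤ q₂) (hne : q₁ ≠ q₂) (ha : 0 < a) (hb : 0 < b) (hab : a + b = 1) :
    a * (w ^ α * q₁ ^ (1 - α)) + b * (w ^ α * q₂ ^ (1 - α)) <
      w ^ α * (a * q₁ + b * q₂) ^ (1 - α) := by
  have hconc := (strictConcaveOn_rpow (p := 1 - α) (by linarith [hα.2]) (by linarith [hα.1])).2
    (Set.mem_Ici.2 hq₁) (Set.mem_Ici.2 hq₂) hne ha hb hab
  simp only [smul_eq_mul] at hconc
  calc a * (w ^ α * q₁ ^ (1 - α)) + b * (w ^ α * q₂ ^ (1 - α))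
      = w ^ α * (a * q₁ ^ (1 - α) + b * q₂ ^ (1 - α)) := by ring
    _ < w ^ α * (a * q₁ + b * q₂) ^ (1 - α) := by gcongr

variable {Y : Type*} [Fintype Y] {w Q₁ Q₂ : Y → ℝ}

lemma IsPMF.exists_pos (hw : IsPMF w) : ∃ y, 0 < w y := by
  by_contra! h
  have hzero : ∑ y, w y = 0 := sum_eq_zero fun y _ => le_antisymm (h y) (hw.1 y)
  linarith [hw.2]

lemma rSum_pos {Q : Y → ℝ} (hw : IsPMF w) (hQ : ∀ y, 0 < Q y) : 0 < rSum α w Q := by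
  obtain ⟨y₀, hy₀⟩ := hw.exists_pos
  refine sum_pos' (fun y _ => ?_) ⟨y₀, mem_univ _, ?_⟩
  · have := hw.1 y; have := hQ y; positivity
  · have := hQ y₀; positivity

lemma rSum_combo_le (hα : α ∈ Set.Icc (0 : ℝ) 1) (hw : ∀ y, 0 ≤ w y)
    (hQ₁ : ∀ y, 0 ≤ Q₁ y) (hQ₂ : ∀ y, 0 ≤ Q₂ y) (ha : 0 ≤ a) (hb : 0 ≤ b) (hab : a + b = 1) :
    a * rSum α w Q₁ + b * rSum α w Q₂ ≤ rSum α w (a • Q₁ + b • Q₂) := by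
  simp only [rSum, mul_sum, ← sum_add_distrib, Pi.add_apply, Pi.smul_apply, smul_eq_mul]
  exact sum_le_sum fun y _ => mul_rpow_combo_le hα (hw y) (hQ₁ y) (hQ₂ y) ha hb hab

lemma rSum_combo_lt (hα : α ∈ Set.Ioo (0 : ℝ) 1) (hw : ∀ y, 0 ≤ w y)
    (hQ₁ : ∀ y, 0 ≤ Q₁ y) (hQ₂ : ∀ y, 0 ≤ Q₂ y) {y₀ : Y} (hwy₀ : 0 < w y₀)
    (hne : Q₁ y₀ ≠ Q₂ y₀) (ha : 0 < a) (hb : 0 < b) (hab : a + b = 1) :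
    a * rSum α w Q₁ + b * rSum α w Q₂ < rSum α w (a • Q₁ + b • Q₂) := by
  simp only [rSum, mul_sum, ← sum_add_distrib, Pi.add_apply, Pi.smul_apply, smul_eq_mul]
  exact sum_lt_sum
    (fun y _ => mul_rpow_combo_le (Set.Ioo_subset_Icc_self hα) (hw y) (hQ₁ y) (hQ₂ y)
      ha.le hb.le hab)
    ⟨y₀, mem_univ _, mul_rpow_combo_lt hα hwy₀ (hQ₁ y₀) (hQ₂ y₀) hne ha hb hab⟩

end PowerSum

section LogConcavity

variable {a b s₁ s₂ t : ℝ}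

lemma add_mul_log_le_log_add (hs₁ : 0 < s₁) (hs₂ : 0 < s₂) (ha : 0 ≤ a) (hb : 0 ≤ b)
    (hab : a + b = 1) : a * log s₁ + b * log s₂ ≤ log (a * s₁ + b * s₂) := by
  simpa only [smul_eq_mul] using
    strictConcaveOn_log_Ioi.concaveOn.2 (Set.mem_Ioi.2 hs₁) (Set.mem_Ioi.2 hs₂) ha hb hab

lemma add_mul_log_le_log_of_le (hs₁ : 0 < s₁) (hs₂ : 0 < s₂) (ha : 0 ≤ a) (hb : 0 ≤ b)
    (hab : a + b = 1) (h : a * s₁ + b * s₂ ≤ t) : a * log s₁ + b * log s₂ ≤ log t :=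
  (add_mul_log_le_log_add hs₁ hs₂ ha hb hab).trans
    (log_le_log (convex_Ioi (0 : ℝ) hs₁ hs₂ ha hb hab) h)

lemma add_mul_log_lt_log_of_lt (hs₁ : 0 < s₁) (hs₂ : 0 < s₂) (ha : 0 < a) (hb : 0 < b)
    (hab : a + b = 1) (h : a * s₁ + b * s₂ < t) : a * log s₁ + b * log s₂ < log t :=
  (add_mul_log_le_log_add hs₁ hs₂ ha.le hb.le hab).trans_lt (log_lt_log (by positivity) h)

end LogConcavity

section Objective

variable {X Y : Type*} [Fintype X] [Fintype Y]

/-- `cDiv α W Q P` as a real number, valid for strictly positive `Q` and `α ≠ 1`, where every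
power sum is positive and no `⊤` occurs. -/
noncomputable def condRenyi (α : ℝ) (W : X → Y → ℝ) (P : X → ℝ) (Q : Y → ℝ) : ℝ :=
  ∑ x, P x * ((1 / (α - 1)) * log (rSum α (W x) Q))

def posSimplex (Y : Type*) [Fintype Y] : Set (Y → ℝ) :=
  {Q | (∀ y, 0 < Q y) ∧ ∑ y, Q y = 1}

lemma convex_posSimplex : Convex ℝ (posSimplex Y) := by
  rintro Q₁ ⟨hpos₁, hsum₁⟩ Q₂ ⟨hpos₂, hsum₂⟩ a b ha hb hab
  refine ⟨fun y => ?_, ?_⟩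
  · exact convex_Ioi (0 : ℝ) (hpos₁ y) (hpos₂ y) ha hb hab
  · simp only [Pi.add_apply, Pi.smul_apply, smul_eq_mul, sum_add_distrib, ← mul_sum, hsum₁,
      hsum₂, mul_one, hab]

theorem strictConvexOn_condRenyi {α : ℝ} (hα : α ∈ Set.Ioo (0 : ℝ) 1) {W : X → Y → ℝ}
    (hW : ∀ x, IsPMF (W x)) {P : X → ℝ} (hP : ∀ x, 0 ≤ P x)
    (hsupp : ∀ y, ∃ x, 0 < P x ∧ 0 < W x y) :
    StrictConvexOn ℝ (posSimplex Y) (condRenyi α W P) := by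
  refine ⟨convex_posSimplex, fun Q₁ hQ₁ Q₂ hQ₂ hne a b ha hb hab => ?_⟩
  obtain ⟨y₀, hy₀⟩ := Function.ne_iff.1 hne
  obtain ⟨x₀, hPx₀, hWx₀⟩ := hsupp y₀
  have hc : 1 / (α - 1) < 0 := one_div_neg.2 (by linarith [hα.2])
  have hS₁ : ∀ x, 0 < rSum α (W x) Q₁ := fun x => rSum_pos (hW x) hQ₁.1
  have hS₂ : ∀ x, 0 < rSum α (W x) Q₂ := fun x => rSum_pos (hW x) hQ₂.1
  have hlog : ∀ x, a * log (rSum α (W x) Q₁) + b * log (rSum α (W x) Q₂) ≤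
      log (rSum α (W x) (a • Q₁ + b • Q₂)) := fun x =>
    add_mul_log_le_log_of_le (hS₁ x) (hS₂ x) ha.le hb.le hab <|
      rSum_combo_le (Set.Ioo_subset_Icc_self hα) (hW x).1 (fun y => (hQ₁.1 y).le)
        (fun y => (hQ₂.1 y).le) ha.le hb.le hab
  have hlog₀ : a * log (rSum α (W x₀) Q₁) + b * log (rSum α (W x₀) Q₂) <
      log (rSum α (W x₀) (a • Q₁ + b • Q₂)) :=
    add_mul_log_lt_log_of_lt (hS₁ x₀) (hS₂ x₀) ha hb hab <|
      rSum_combo_lt hα (hW x₀).1 (fun y => (hQ₁.1 y).le) (fun y => (hQ₂.1 y).le) hWx₀ hy₀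
        ha hb hab
  have hcombo : a • condRenyi α W P Q₁ + b • condRenyi α W P Q₂ =
      ∑ x, P x * ((1 / (α - 1)) *
        (a * log (rSum α (W x) Q₁) + b * log (rSum α (W x) Q₂))) := by
    simp only [condRenyi, smul_eq_mul, mul_sum, ← sum_add_distrib]
    exact sum_congr rfl fun x _ => by ring
  rw [hcombo]
  refine sum_lt_sum (fun x _ => ?_) ⟨x₀, mem_univ _, ?_⟩
  · exact mul_le_mul_of_nonneg_left (mul_le_mul_of_nonpos_left (hlog x) hc.le) (hP x)
  · exact mul_lt_mul_of_pos_left (mul_lt_mul_of_neg_left hlog₀ hc) hPx₀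

end Objective

theorem augustin_mean_unique_general {X Y : Type*} [Fintype X] [Fintype Y]
    (α : ℝ) (hα : α ∈ Set.Ioo (0 : ℝ) 1)
    (W : X → Y → ℝ) (hW : ∀ x, IsPMF (W x))
    (P : X → ℝ) (hP : IsPMF P)
    (hsupp : ∀ y, ∃ x, 0 < P x ∧ 0 < W x y)
    (Q₁ Q₂ : Y → ℝ)
    (hQ₁ : (∀ y, 0 < Q₁ y) ∧ ∑ y, Q₁ y = 1)
    (hQ₂ : (∀ y, 0 < Q₂ y) ∧ ∑ y, Q₂ y = 1)
    (hmin₁ : ∀ Q : Y → ℝ, (∀ y, 0 < Q y) → ∑ y, Q y = 1 →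
      ∑ x, P x * ((1 / (α - 1)) * Real.log (∑ y, W x y ^ α * Q₁ y ^ (1 - α))) ≤
        ∑ x, P x * ((1 / (α - 1)) * Real.log (∑ y, W x y ^ α * Q y ^ (1 - α))))
    (hmin₂ : ∀ Q : Y → ℝ, (∀ y, 0 < Q y) → ∑ y, Q y = 1 →
      ∑ x, P x * ((1 / (α - 1)) * Real.log (∑ y, W x y ^ α * Q₂ y ^ (1 - α))) ≤
        ∑ x, P x * ((1 / (α - 1)) * Real.log (∑ y, W x y ^ α * Q y ^ (1 - α)))) :
    Q₁ = Q₂ :=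
  (strictConvexOn_condRenyi hα hW hP.1 hsupp).eq_of_isMinOn
    (isMinOn_iff.2 fun Q hQ => hmin₁ Q hQ.1 hQ.2) (isMinOn_iff.2 fun Q hQ => hmin₂ Q hQ.1 hQ.2)
    hQ₁ hQ₂

/-- uniqueness of the Augustin mean among strictly positive minimizers. -/
theorem augustin_mean_unique {X Y : Type*} [Fintype X] [Fintype Y]
    [Nonempty X] [Nonempty Y]
    (α : ℝ) (hα : α ∈ Set.Ioo (0 : ℝ) 1)
    (W : X → Y → ℝ) (hW : ∀ x, IsPMF (W x))
    (P : X → ℝ) (hP : IsPMF P) (hPpos : ∀ x, 0 < P x)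
    (hsupp : ∀ y, ∃ x, 0 < P x ∧ 0 < W x y)
    (Q₁ Q₂ : Y → ℝ)
    (hQ₁ : (∀ y, 0 < Q₁ y) ∧ ∑ y, Q₁ y = 1)
    (hQ₂ : (∀ y, 0 < Q₂ y) ∧ ∑ y, Q₂ y = 1)
    (hmin₁ : ∀ Q : Y → ℝ, (∀ y, 0 < Q y) → ∑ y, Q y = 1 →
      ∑ x, P x * ((1 / (α - 1)) * Real.log (∑ y, W x y ^ α * Q₁ y ^ (1 - α))) ≤
        ∑ x, P x * ((1 / (α - 1)) * Real.log (∑ y, W x y ^ α * Q y ^ (1 - α))))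
    (hmin₂ : ∀ Q : Y → ℝ, (∀ y, 0 < Q y) → ∑ y, Q y = 1 →
      ∑ x, P x * ((1 / (α - 1)) * Real.log (∑ y, W x y ^ α * Q₂ y ^ (1 - α))) ≤
        ∑ x, P x * ((1 / (α - 1)) * Real.log (∑ y, W x y ^ α * Q y ^ (1 - α)))) :
    Q₁ = Q₂ :=
  augustin_mean_unique_general α hα W hW P hP hsupp Q₁ Q₂ hQ₁ hQ₂ hmin₁ hmin₂
end

section
/- Let W : X → P(Y) with X, Y finite, ρ : X → ℝ≥0^ℓ, α ∈ (0,1], λ ∈ ℝ≥0^ℓ. Define the A-L radius R_α^λ(W) := inf_Q sup_{x ∈ X} [ D_α(W(x)‖Q) − λ·ρ(x) ], where Q ranges over probability mass functions on Y. Then the A-L capacity C_α^λ(W) := sup_P [ I_α(P;W) − λ·Σ_x P(x)ρ(x) ] satisfies C_α^λ(W) = R_α^λ(W). -/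
open scoped BigOperators

/-- Augustin–Legendre capacity `C_α^λ(W) = sup_P [I_α(P;W) − λ·E_P[ρ]]`. -/
noncomputable def alCap {X Y : Type*} [Fintype X] [Fintype Y] {l : ℕ}
    (α : ℝ) (W : X → Y → ℝ) (ρ : X → Fin l → ℝ) (lam : Fin l → ℝ) : EReal :=
  ⨆ P ∈ {P : X → ℝ | IsPMF P},
    (aInfo α P W - (((∑ i, lam i * ∑ x, P x * ρ x i) : ℝ) : EReal))

/-!
`C ≤ R` is weak duality: an average over `P` is at most the supremum over `x`. For the converse,
take a real `t` strictly below `R`. The set of vectors `z : X → ℝ` for which some `Q` satisfies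
`D_α(W x‖Q) − λ·ρ(x) ≤ z x` for every `x` is convex (the divergence is convex in `Q`), closed (it
is lower semicontinuous in `Q` and the simplex is compact) and upward closed, and it misses the
constant vector `t`. A hyperplane separating them has a nonnegative normal, which normalizes to an
input distribution `P` with `t < ∑ P x z x` on the whole set. Mixing an arbitrary `Q` with the
uniform distribution makes all divergences finite and puts the mixture in the set; letting the
mixing weight go to zero gives `t ≤ ∑ P x (D_α(W x‖Q) − λ·ρ(x))`, hence `t ≤ C`.
-/

open Set Filter Topology Finset

namespace EReal

lemma coe_finset_sum {ι : Type*} (s : Finset ι) (f : ι → ℝ) :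
    ((∑ i ∈ s, f i : ℝ) : EReal) = ∑ i ∈ s, (f i : EReal) :=
  map_sum (⟨⟨Real.toEReal, coe_zero⟩, coe_add⟩ : ℝ →+ EReal) f s

lemma finset_sum_ne_bot {ι : Type*} {s : Finset ι} {f : ι → EReal} (h : ∀ i ∈ s, f i ≠ ⊥) :
    ∑ i ∈ s, f i ≠ ⊥ :=
  Finset.sum_induction f (· ≠ ⊥) (fun _ _ ha hb => add_ne_bot_iff.2 ⟨ha, hb⟩) (by simp) h

lemma finset_sum_mul_of_nonneg {ι : Type*} {s : Finset ι} {a : ι → EReal}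
    (ha : ∀ i ∈ s, 0 ≤ a i) (c : EReal) : (∑ i ∈ s, a i) * c = ∑ i ∈ s, a i * c := by
  classical
  induction s using Finset.induction with
  | empty => simp
  | insert i s hi ih =>
    rw [sum_insert hi, sum_insert hi,
      right_distrib_of_nonneg (ha i (mem_insert_self i s))
        (sum_nonneg fun j hj => ha j (mem_insert_of_mem hj)),
      ih fun j hj => ha j (mem_insert_of_mem hj)]

lemma coe_mul_ne_bot {p : ℝ} (hp : 0 ≤ p) {a : EReal} (ha : a ≠ ⊥) : (p : EReal) * a ≠ ⊥ := by
  induction a using EReal.rec with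
  | bot => exact absurd rfl ha
  | coe r => exact coe_ne_bot (p * r)
  | top => rcases hp.lt_or_eq with h | rfl <;> simp [coe_mul_top_of_pos, *]

lemma sub_coe_ne_bot {a : EReal} (ha : a ≠ ⊥) (c : ℝ) : a - c ≠ ⊥ := by
  rw [sub_eq_add_neg, ← coe_neg]
  exact add_ne_bot_iff.2 ⟨ha, coe_ne_bot _⟩

lemma sub_coe_ne_top {a : EReal} (ha : a ≠ ⊤) (c : ℝ) : a - c ≠ ⊤ := by
  rw [sub_eq_add_neg, ← coe_neg]
  exact (add_lt_top ha (coe_ne_top _)).ne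

variable {ι : Type*} [Fintype ι] {p : ι → ℝ}

lemma sum_coe_mul_le_iSup (hp : p ∈ stdSimplex ℝ ι) (f : ι → EReal) :
    ∑ i, (p i : EReal) * f i ≤ ⨆ i, f i :=
  calc ∑ i, (p i : EReal) * f i ≤ ∑ i, (p i : EReal) * ⨆ j, f j :=
        sum_le_sum fun i _ => mul_le_mul_of_nonneg_left (le_iSup f i) (EReal.coe_nonneg.2 (hp.1 i))
    _ = ⨆ i, f i := by
        rw [← finset_sum_mul_of_nonneg fun i _ => EReal.coe_nonneg.2 (hp.1 i), ← coe_finset_sum,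
          hp.2, coe_one, one_mul]

lemma sum_coe_mul_eq_top (hp : ∀ i, 0 ≤ p i) {f : ι → EReal} (hf : ∀ i, f i ≠ ⊥) {i₀ : ι}
    (hi₀ : p i₀ ≠ 0) (htop : f i₀ = ⊤) : ∑ i, (p i : EReal) * f i = ⊤ := by
  classical
  rw [← add_sum_erase _ _ (mem_univ i₀), htop, coe_mul_top_of_pos ((hp i₀).lt_of_ne' hi₀)]
  exact top_add_of_ne_bot (finset_sum_ne_bot fun i _ => coe_mul_ne_bot (hp i) (hf i))

lemma sum_coe_mul_eq_coe {f : ι → EReal} (hf : ∀ i, f i ≠ ⊥) (htop : ∀ i, p i ≠ 0 → f i ≠ ⊤) :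
    ∑ i, (p i : EReal) * f i = ((∑ i, p i * (f i).toReal : ℝ) : EReal) := by
  rw [coe_finset_sum]
  refine sum_congr rfl fun i _ => ?_
  rcases eq_or_ne (p i) 0 with hi | hi
  · simp [hi]
  · rw [coe_mul, coe_toReal (htop i hi) (hf i)]

lemma sum_coe_mul_sub_coe (hp : ∀ i, 0 ≤ p i) (f : ι → EReal) (g : ι → ℝ) :
    ∑ i, (p i : EReal) * (f i - g i)
      = ∑ i, (p i : EReal) * f i - ((∑ i, p i * g i : ℝ) : EReal) := by
  have hterm : ∀ i,
      (p i : EReal) * (f i - g i) = (p i : EReal) * f i + ((-(p i * g i) : ℝ) : EReal) :=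
    fun i => by
      rw [mul_sub_of_nonneg_of_ne_top (EReal.coe_nonneg.2 (hp i)) (coe_ne_top _), ← coe_mul,
        sub_eq_add_neg, coe_neg]
  simp_rw [hterm, sum_add_distrib, ← coe_finset_sum, sum_neg_distrib, coe_neg, sub_eq_add_neg]

lemma biInf_sub_coe {β : Type*} (S : Set β) (f : β → EReal) (c : ℝ) :
    (⨅ b ∈ S, f b) - c = ⨅ b ∈ S, (f b - c) := by
  refine le_antisymm (le_iInf₂ fun b hb => sub_le_sub (iInf₂_le b hb) le_rfl) ?_
  rw [le_sub_iff_add_le (.inl (coe_ne_bot c)) (.inl (coe_ne_top c))]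
  exact le_iInf₂ fun b hb => (add_le_add_left (iInf₂_le b hb) _).trans_eq sub_add_cancel

end EReal

lemma le_of_forall_lt_mix {t a b : ℝ} (h : ∀ ε ∈ Ioo (0 : ℝ) 1, t < (1 - ε) * a + ε * b) :
    t ≤ a := by
  have hlim : Tendsto (fun ε : ℝ => (1 - ε) * a + ε * b) (𝓝[>] 0) (𝓝 a) := by
    have hcont : Continuous fun ε : ℝ => (1 - ε) * a + ε * b := by fun_prop
    simpa using (hcont.tendsto 0).mono_left nhdsWithin_le_nhds
  refine ge_of_tendsto hlim ?_
  filter_upwards [Ioo_mem_nhdsGT zero_lt_one] with ε hε using (h ε hε).le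

theorem exists_mem_stdSimplex_forall_lt_sum_mul {X : Type*} [Fintype X] {C : Set (X → ℝ)}
    (hconv : Convex ℝ C) (hclosed : IsClosed C) (hup : IsUpperSet C) {z₀ : X → ℝ} (hz₀ : z₀ ∈ C)
    {t : ℝ} (ht : (fun _ => t) ∉ C) :
    ∃ P ∈ stdSimplex ℝ X, ∀ z ∈ C, t < ∑ x, P x * z x := by
  classical
  obtain ⟨f, u, hft, hfC⟩ := geometric_hahn_banach_point_closed hconv hclosed ht
  set μ : X → ℝ := fun x => f (Pi.single x 1)
  have hf : ∀ z, f z = ∑ x, μ x * z x := fun z => by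
    conv_lhs => rw [← univ_sum_single z]
    rw [map_sum]
    refine sum_congr rfl fun x _ => ?_
    have hsingle : Pi.single x (z x) = z x • Pi.single x (1 : ℝ) := by
      rw [← Pi.single_smul, smul_eq_mul, mul_one]
    rw [hsingle, map_smul, smul_eq_mul, mul_comm]
  have hμ : ∀ x, 0 ≤ μ x := fun x => by
    -- otherwise the ray from `z₀` in direction `x`, which stays in `C`, reaches the level `u`
    by_contra! hx
    have hmem : z₀ + ((u - f z₀) / μ x) • Pi.single x 1 ∈ C :=
      hup (le_add_of_nonneg_right (smul_nonneg (div_nonneg_of_nonpos (by linarith [hfC z₀ hz₀])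
        hx.le) (Pi.single_nonneg.2 zero_le_one))) hz₀
    have hlt := hfC _ hmem
    rw [map_add, map_smul, smul_eq_mul, div_mul_cancel₀ _ hx.ne] at hlt
    linarith
  have hs : 0 < ∑ x, μ x := by
    refine (sum_nonneg fun x _ => hμ x).lt_of_ne fun hs => ?_
    have hμ0 : ∀ x, μ x = 0 := fun x =>
      (sum_eq_zero_iff_of_nonneg fun x _ => hμ x).1 hs.symm x (Finset.mem_univ x)
    have hfz₀ := hfC z₀ hz₀
    simp only [hf, hμ0, zero_mul, sum_const_zero] at hft hfz₀
    linarith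
  refine ⟨fun x => μ x / ∑ x, μ x,
    ⟨fun x => div_nonneg (hμ x) hs.le, by rw [← sum_div, div_self hs.ne']⟩, fun z hz => ?_⟩
  have hfz := hfC z hz
  rw [hf] at hft hfz
  simp_rw [div_mul_eq_mul_div, ← sum_div, lt_div_iff₀ hs, mul_sum, mul_comm t]
  linarith

theorem iSup_iInf_sum_le_iInf_iSup {X E : Type*} [Fintype X] (K : Set E) (φ : X → E → EReal) :
    ⨆ P ∈ stdSimplex ℝ X, ⨅ Q ∈ K, ∑ x, (P x : EReal) * φ x Q ≤ ⨅ Q ∈ K, ⨆ x, φ x Q :=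
  iSup₂_le fun _ hP => le_iInf₂ fun Q hQ =>
    (iInf₂_le Q hQ).trans (EReal.sum_coe_mul_le_iSup hP _)

section Minimax

variable {X E : Type*} {K : Set E}

-- `ConvexOn` needs a module as codomain, so convexity of an `EReal`-valued `f` on `K` is stated
-- as convexity of this epigraph, which keeps only real heights.
def epigraphOn (K : Set E) (f : E → EReal) : Set (E × ℝ) :=
  {p | p.1 ∈ K ∧ f p.1 ≤ p.2}

lemma epigraphOn_sub_coe [AddZeroClass E] (f : E → EReal) (c : ℝ) :
    epigraphOn K (fun Q => f Q - c) = (fun p => ((0 : E), c) + p) ⁻¹' epigraphOn K f := by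
  ext ⟨Q, d⟩
  simp [epigraphOn, EReal.sub_le_iff_le_add (.inl (EReal.coe_ne_bot c)) (.inl (EReal.coe_ne_top c)),
    add_comm c]

def upperImage (K : Set E) (φ : X → E → EReal) : Set (X → ℝ) :=
  {z | ∃ Q ∈ K, ∀ x, φ x Q ≤ z x}

variable {φ : X → E → EReal}

lemma isUpperSet_upperImage : IsUpperSet (upperImage K φ) :=
  fun _ _ hzw ⟨Q, hQ, h⟩ => ⟨Q, hQ, fun x => (h x).trans (EReal.coe_le_coe_iff.2 (hzw x))⟩

lemma convex_upperImage [AddCommGroup E] [Module ℝ E] (hK : Convex ℝ K)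
    (hφ : ∀ x, Convex ℝ (epigraphOn K (φ x))) : Convex ℝ (upperImage K φ) := by
  rintro z₁ ⟨Q₁, hQ₁, h₁⟩ z₂ ⟨Q₂, hQ₂, h₂⟩ a b ha hb hab
  exact ⟨a • Q₁ + b • Q₂, hK hQ₁ hQ₂ ha hb hab, fun x =>
    (@hφ x (Q₁, z₁ x) ⟨hQ₁, h₁ x⟩ (Q₂, z₂ x) ⟨hQ₂, h₂ x⟩ a b ha hb hab).2⟩

lemma isClosed_upperImage [TopologicalSpace E] (hK : IsCompact K)
    (hφ : ∀ x, IsClosed (epigraphOn K (φ x))) : IsClosed (upperImage K φ) := by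
  have : CompactSpace K := isCompact_iff_compactSpace.1 hK
  have hS : IsClosed (⋂ x, (fun p : (X → ℝ) × K => ((p.2 : E), p.1 x)) ⁻¹' epigraphOn K (φ x)) :=
    isClosed_iInter fun x => (hφ x).preimage (by fun_prop)
  convert isClosedMap_fst_of_compactSpace _ hS using 1
  ext z
  simp [upperImage, epigraphOn]

variable [Fintype X] [AddCommGroup E] [Module ℝ E]

lemma coe_le_sum_mul_of_forall_mem_upperImage (hK : Convex ℝ K) (hbot : ∀ x Q, φ x Q ≠ ⊥)
    (hφ : ∀ x, Convex ℝ (epigraphOn K (φ x))) {U : E} (hU : U ∈ K)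
    (hfin : ∀ x, ∀ Q ∈ K, ∀ ε ∈ Ioc (0 : ℝ) 1, φ x ((1 - ε) • Q + ε • U) ≠ ⊤)
    {P : X → ℝ} (hP : P ∈ stdSimplex ℝ X) {t : ℝ}
    (ht : ∀ z ∈ upperImage K φ, t < ∑ x, P x * z x) {Q : E} (hQ : Q ∈ K) :
    (t : EReal) ≤ ∑ x, (P x : EReal) * φ x Q := by
  by_cases htop : ∃ x, P x ≠ 0 ∧ φ x Q = ⊤
  · obtain ⟨x₀, hx₀, hx₀top⟩ := htop
    rw [EReal.sum_coe_mul_eq_top hP.1 (hbot · Q) hx₀ hx₀top]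
    exact le_top
  push Not at htop
  have hUfin : ∀ x, φ x U ≠ ⊤ := fun x => by simpa using hfin x Q hQ 1 (by simp)
  rw [EReal.sum_coe_mul_eq_coe (hbot · Q) htop, EReal.coe_le_coe_iff]
  refine le_of_forall_lt_mix (b := ∑ x, P x * (φ x U).toReal) fun ε hε => ?_
  set Qε := (1 - ε) • Q + ε • U
  have hεfin : ∀ x, φ x Qε ≠ ⊤ := fun x => hfin x Q hQ ε ⟨hε.1, hε.2.le⟩
  have hmem : (fun x => (φ x Qε).toReal) ∈ upperImage K φ :=
    ⟨Qε, hK hQ hU (by linarith [hε.2]) hε.1.le (by ring), fun x => EReal.le_coe_toReal (hεfin x)⟩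
  have hmix : ∀ x, P x ≠ 0 →
      (φ x Qε).toReal ≤ (1 - ε) * (φ x Q).toReal + ε * (φ x U).toReal := fun x hx => by
    have hle : φ x Qε ≤ ((1 - ε) * (φ x Q).toReal + ε * (φ x U).toReal : ℝ) :=
      (@hφ x (Q, (φ x Q).toReal) ⟨hQ, EReal.le_coe_toReal (htop x hx)⟩
        (U, (φ x U).toReal) ⟨hU, EReal.le_coe_toReal (hUfin x)⟩ (1 - ε) ε
        (by linarith [hε.2]) hε.1.le (by ring)).2
    exact (EReal.toReal_le_toReal hle (hbot x Qε) (EReal.coe_ne_top _)).trans_eq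
      (EReal.toReal_coe _)
  calc t < ∑ x, P x * (φ x Qε).toReal := ht _ hmem
    _ ≤ ∑ x, P x * ((1 - ε) * (φ x Q).toReal + ε * (φ x U).toReal) := by
        refine sum_le_sum fun x _ => ?_
        rcases eq_or_ne (P x) 0 with hx | hx
        · simp [hx]
        · exact mul_le_mul_of_nonneg_left (hmix x hx) (hP.1 x)
    _ = (1 - ε) * ∑ x, P x * (φ x Q).toReal + ε * ∑ x, P x * (φ x U).toReal := by
        simp only [mul_sum, ← sum_add_distrib]
        exact sum_congr rfl fun x _ => by ring

theorem iSup_iInf_sum_eq_iInf_iSup [TopologicalSpace E] (hKc : IsCompact K) (hK : Convex ℝ K)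
    (hbot : ∀ x Q, φ x Q ≠ ⊥) (hconv : ∀ x, Convex ℝ (epigraphOn K (φ x)))
    (hclosed : ∀ x, IsClosed (epigraphOn K (φ x))) {U : E} (hU : U ∈ K)
    (hfin : ∀ x, ∀ Q ∈ K, ∀ ε ∈ Ioc (0 : ℝ) 1, φ x ((1 - ε) • Q + ε • U) ≠ ⊤) :
    ⨆ P ∈ stdSimplex ℝ X, ⨅ Q ∈ K, ∑ x, (P x : EReal) * φ x Q = ⨅ Q ∈ K, ⨆ x, φ x Q := by
  refine (iSup_iInf_sum_le_iInf_iSup K φ).antisymm (EReal.ge_of_forall_gt_iff_ge.1 fun t ht => ?_)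
  have hUfin : ∀ x, φ x U ≠ ⊤ := fun x => by simpa using hfin x U hU 1 (by simp)
  have hz₀ : (fun x => (φ x U).toReal) ∈ upperImage K φ :=
    ⟨U, hU, fun x => EReal.le_coe_toReal (hUfin x)⟩
  have ht' : (fun _ => t) ∉ upperImage K φ := fun ⟨Q, hQ, hQt⟩ =>
    (ht.trans_le ((iInf₂_le Q hQ).trans (iSup_le hQt))).false
  obtain ⟨P, hP, hPC⟩ := exists_mem_stdSimplex_forall_lt_sum_mul (convex_upperImage hK hconv)
    (isClosed_upperImage hKc hclosed) isUpperSet_upperImage hz₀ ht'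
  exact le_iSup₂_of_le P hP <| le_iInf₂ fun Q hQ =>
    coe_le_sum_mul_of_forall_mem_upperImage hK hbot hconv hU hfin hP hPC hQ

end Minimax

section Divergence

variable {Y : Type*} [Fintype Y] {α : ℝ} {W Q : Y → ℝ}

-- `Real.rpow` has `0 ^ 0 = 1`, so factors with `W y = 0` are `1` whatever `Q y` is.
noncomputable def weightedGeomMean (W Q : Y → ℝ) : ℝ :=
  ∏ y, Q y ^ W y

/- `expDiv α W Q = expScale α W (dA α W Q)`, read as `0` where `dA α W Q = ⊤`, and
`expScale α W` is a decreasing exponential. So the sublevel sets of `dA α W` are superlevel sets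
of `expDiv α W`, which is continuous and log-concave in `Q`. -/
noncomputable def expDiv (α : ℝ) (W Q : Y → ℝ) : ℝ :=
  if α = 1 then weightedGeomMean W Q else rSum α W Q

noncomputable def expScale (α : ℝ) (W : Y → ℝ) (z : ℝ) : ℝ :=
  if α = 1 then Real.exp (∑ y, W y * Real.log (W y) - z) else Real.exp ((α - 1) * z)

lemma rSum_nonneg (hW : ∀ y, 0 ≤ W y) (hQ : ∀ y, 0 ≤ Q y) : 0 ≤ rSum α W Q :=
  sum_nonneg fun y _ => mul_nonneg (Real.rpow_nonneg (hW y) _) (Real.rpow_nonneg (hQ y) _)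

lemma dA_ne_bot (α : ℝ) (W Q : Y → ℝ) : dA α W Q ≠ ⊥ := by
  unfold dA kDiv rDiv
  split_ifs <;> simp [-EReal.coe_mul]

lemma dA_ne_top_of_pos (hW : IsPMF W) (hQ : ∀ y, 0 < Q y) : dA α W Q ≠ ⊤ := by
  obtain ⟨y₀, hy₀⟩ : ∃ y, W y ≠ 0 := by
    by_contra! h
    simpa [h] using hW.2
  have hS : 0 < rSum α W Q :=
    sum_pos' (fun y _ => mul_nonneg (Real.rpow_nonneg (hW.1 y) _) (Real.rpow_nonneg (hQ y).le _))
      ⟨y₀, mem_univ _, mul_pos (Real.rpow_pos_of_pos ((hW.1 y₀).lt_of_ne' hy₀) _)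
        (Real.rpow_pos_of_pos (hQ y₀) _)⟩
  unfold dA kDiv rDiv
  split_ifs with _ hac
  · exact EReal.coe_ne_top _
  · exact absurd (fun y hy => absurd hy (hQ y).ne') hac
  · exact absurd ‹rSum α W Q = 0› hS.ne'
  · exact EReal.coe_ne_top _

lemma kDiv_le_coe_iff (hQ : ∀ y, 0 ≤ Q y) (z : ℝ) :
    kDiv W Q ≤ z ↔ Real.exp (∑ y, W y * Real.log (W y) - z) ≤ weightedGeomMean W Q := by
  unfold kDiv
  split_ifs with hac
  · have hpos : ∀ y, W y ≠ 0 → 0 < Q y := fun y hy => (hQ y).lt_of_ne' fun h => hy (hac y h)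
    have hfac : ∀ y, 0 < Q y ^ W y := fun y => by
      rcases eq_or_ne (W y) 0 with h | h
      · simp [h]
      · exact Real.rpow_pos_of_pos (hpos y h) _
    have hG : 0 < weightedGeomMean W Q := prod_pos fun y _ => hfac y
    have hlog : Real.log (weightedGeomMean W Q) = ∑ y, W y * Real.log (Q y) := by
      rw [weightedGeomMean, Real.log_prod fun y _ => (hfac y).ne']
      refine sum_congr rfl fun y _ => ?_
      rcases eq_or_ne (W y) 0 with h | h
      · simp [h]
      · exact Real.log_rpow (hpos y h) _
    have hkl : (∑ y, if W y = 0 then 0 else W y * Real.log (W y / Q y))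
        = ∑ y, W y * Real.log (W y) - ∑ y, W y * Real.log (Q y) := by
      rw [← sum_sub_distrib]
      refine sum_congr rfl fun y _ => ?_
      split_ifs with h
      · simp [h]
      · rw [Real.log_div h (hpos y h).ne', mul_sub]
    rw [EReal.coe_le_coe_iff, hkl, ← Real.le_log_iff_exp_le hG, hlog]
    constructor <;> intro h <;> linarith
  · push Not at hac
    obtain ⟨y₀, hQ₀, hW₀⟩ := hac
    have hG : weightedGeomMean W Q = 0 :=
      prod_eq_zero (mem_univ y₀) (by rw [hQ₀, Real.zero_rpow hW₀])
    simp [hG, Real.exp_pos]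

lemma rDiv_le_coe_iff (hα : α < 1) (hW : ∀ y, 0 ≤ W y) (hQ : ∀ y, 0 ≤ Q y) (z : ℝ) :
    rDiv α W Q ≤ z ↔ Real.exp ((α - 1) * z) ≤ rSum α W Q := by
  unfold rDiv
  split_ifs with h0
  · simp [h0, Real.exp_pos]
  · have hS : 0 < rSum α W Q := (rSum_nonneg hW hQ).lt_of_ne' h0
    rw [EReal.coe_le_coe_iff, one_div, ← div_eq_inv_mul, div_le_iff_of_neg (by linarith),
      Real.le_log_iff_exp_le hS, mul_comm]

lemma dA_le_coe_iff (hα : α ≤ 1) (hW : ∀ y, 0 ≤ W y) (hQ : ∀ y, 0 ≤ Q y) (z : ℝ) :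
    dA α W Q ≤ z ↔ expScale α W z ≤ expDiv α W Q := by
  unfold dA expScale expDiv
  split_ifs with h1
  · exact kDiv_le_coe_iff hQ z
  · exact rDiv_le_coe_iff (hα.lt_of_ne h1) hW hQ z

lemma continuous_expDiv (hα : α ≤ 1) (hW : ∀ y, 0 ≤ W y) : Continuous (expDiv α W) := by
  by_cases h1 : α = 1
  · rw [show expDiv α W = weightedGeomMean W from funext fun Q => if_pos h1]
    exact continuous_finsetProd _ fun y _ =>
      (Real.continuous_rpow_const (hW y)).comp (continuous_apply y)
  · rw [show expDiv α W = rSum α W from funext fun Q => if_neg h1]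
    exact continuous_finsetSum _ fun y _ => continuous_const.mul
      ((Real.continuous_rpow_const (by linarith [hα.lt_of_ne h1])).comp (continuous_apply y))

lemma continuous_expScale : Continuous (expScale α W) := by
  unfold expScale
  split_ifs <;> fun_prop

lemma expScale_pos (z : ℝ) : 0 < expScale α W z := by
  unfold expScale
  split_ifs <;> exact Real.exp_pos _

lemma expScale_add {a b : ℝ} (hab : a + b = 1) (d₁ d₂ : ℝ) :
    expScale α W (a * d₁ + b * d₂) = expScale α W d₁ ^ a * expScale α W d₂ ^ b := by
  unfold expScale
  split_ifs <;> rw [← Real.exp_mul, ← Real.exp_mul, ← Real.exp_add] <;> congr 1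
  · linear_combination -(∑ y, W y * Real.log (W y)) * hab
  · ring

variable {Q₁ Q₂ : Y → ℝ} {a b : ℝ}

lemma weightedGeomMean_mix (hW : ∀ y, 0 ≤ W y) (hQ₁ : ∀ y, 0 ≤ Q₁ y) (hQ₂ : ∀ y, 0 ≤ Q₂ y)
    (ha : 0 ≤ a) (hb : 0 ≤ b) (hab : a + b = 1) :
    weightedGeomMean W Q₁ ^ a * weightedGeomMean W Q₂ ^ b
      ≤ weightedGeomMean W (a • Q₁ + b • Q₂) := by
  unfold weightedGeomMean
  rw [← Real.finsetProd_rpow _ _ (fun y _ => Real.rpow_nonneg (hQ₁ y) _),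
    ← Real.finsetProd_rpow _ _ (fun y _ => Real.rpow_nonneg (hQ₂ y) _), ← prod_mul_distrib]
  refine prod_le_prod (fun y _ => mul_nonneg (Real.rpow_nonneg (Real.rpow_nonneg (hQ₁ y) _) _)
    (Real.rpow_nonneg (Real.rpow_nonneg (hQ₂ y) _) _)) fun y _ => ?_
  have hQ₁a := Real.rpow_nonneg (hQ₁ y) a
  have hQ₂b := Real.rpow_nonneg (hQ₂ y) b
  have h₁ : (Q₁ y ^ W y) ^ a = (Q₁ y ^ a) ^ W y := by
    rw [← Real.rpow_mul (hQ₁ y), ← Real.rpow_mul (hQ₁ y), mul_comm]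
  have h₂ : (Q₂ y ^ W y) ^ b = (Q₂ y ^ b) ^ W y := by
    rw [← Real.rpow_mul (hQ₂ y), ← Real.rpow_mul (hQ₂ y), mul_comm]
  rw [h₁, h₂, ← Real.mul_rpow hQ₁a hQ₂b]
  exact Real.rpow_le_rpow (by positivity)
    (Real.geom_mean_le_arith_mean2_weighted ha hb (hQ₁ y) (hQ₂ y) hab) (hW y)

lemma rSum_mix (hα : α ∈ Icc (0 : ℝ) 1) (hW : ∀ y, 0 ≤ W y) (hQ₁ : ∀ y, 0 ≤ Q₁ y)
    (hQ₂ : ∀ y, 0 ≤ Q₂ y) (ha : 0 ≤ a) (hb : 0 ≤ b) (hab : a + b = 1) :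
    rSum α W Q₁ ^ a * rSum α W Q₂ ^ b ≤ rSum α W (a • Q₁ + b • Q₂) :=
  calc rSum α W Q₁ ^ a * rSum α W Q₂ ^ b ≤ a * rSum α W Q₁ + b * rSum α W Q₂ :=
        Real.geom_mean_le_arith_mean2_weighted ha hb (rSum_nonneg hW hQ₁) (rSum_nonneg hW hQ₂) hab
    _ ≤ rSum α W (a • Q₁ + b • Q₂) := by
        simp only [rSum, mul_sum, ← sum_add_distrib]
        refine sum_le_sum fun y _ => ?_
        have hconc := (Real.concaveOn_rpow (sub_nonneg.2 hα.2) (by linarith [hα.1])).2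
          (mem_Ici.2 (hQ₁ y)) (mem_Ici.2 (hQ₂ y)) ha hb hab
        simp only [smul_eq_mul] at hconc
        calc a * (W y ^ α * Q₁ y ^ (1 - α)) + b * (W y ^ α * Q₂ y ^ (1 - α))
            = W y ^ α * (a * Q₁ y ^ (1 - α) + b * Q₂ y ^ (1 - α)) := by ring
          _ ≤ W y ^ α * (a • Q₁ + b • Q₂) y ^ (1 - α) :=
              mul_le_mul_of_nonneg_left hconc (Real.rpow_nonneg (hW y) _)

lemma expDiv_mix (hα : α ∈ Icc (0 : ℝ) 1) (hW : ∀ y, 0 ≤ W y) (hQ₁ : ∀ y, 0 ≤ Q₁ y)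
    (hQ₂ : ∀ y, 0 ≤ Q₂ y) (ha : 0 ≤ a) (hb : 0 ≤ b) (hab : a + b = 1) :
    expDiv α W Q₁ ^ a * expDiv α W Q₂ ^ b ≤ expDiv α W (a • Q₁ + b • Q₂) := by
  unfold expDiv
  split_ifs
  · exact weightedGeomMean_mix hW hQ₁ hQ₂ ha hb hab
  · exact rSum_mix hα hW hQ₁ hQ₂ ha hb hab

lemma convex_epigraphOn_dA (hα : α ∈ Icc (0 : ℝ) 1) (hW : ∀ y, 0 ≤ W y) :
    Convex ℝ (epigraphOn (stdSimplex ℝ Y) (dA α W)) := by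
  rintro ⟨Q₁, d₁⟩ ⟨hQ₁, h₁⟩ ⟨Q₂, d₂⟩ ⟨hQ₂, h₂⟩ a b ha hb hab
  have hQ := convex_stdSimplex ℝ Y hQ₁ hQ₂ ha hb hab
  refine ⟨hQ, ?_⟩
  change dA α W (a • Q₁ + b • Q₂) ≤ ((a * d₁ + b * d₂ : ℝ) : EReal)
  rw [dA_le_coe_iff hα.2 hW hQ.1]
  rw [dA_le_coe_iff hα.2 hW hQ₁.1] at h₁
  rw [dA_le_coe_iff hα.2 hW hQ₂.1] at h₂
  calc expScale α W (a * d₁ + b * d₂) = expScale α W d₁ ^ a * expScale α W d₂ ^ b :=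
        expScale_add hab d₁ d₂
    _ ≤ expDiv α W Q₁ ^ a * expDiv α W Q₂ ^ b :=
        mul_le_mul (Real.rpow_le_rpow (expScale_pos d₁).le h₁ ha)
          (Real.rpow_le_rpow (expScale_pos d₂).le h₂ hb)
          (Real.rpow_nonneg (expScale_pos d₂).le b)
          (Real.rpow_nonneg ((expScale_pos d₁).le.trans h₁) a)
    _ ≤ expDiv α W (a • Q₁ + b • Q₂) := expDiv_mix hα hW hQ₁.1 hQ₂.1 ha hb hab

lemma isClosed_epigraphOn_dA (hα : α ≤ 1) (hW : ∀ y, 0 ≤ W y) :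
    IsClosed (epigraphOn (stdSimplex ℝ Y) (dA α W)) := by
  have hepi : epigraphOn (stdSimplex ℝ Y) (dA α W)
      = Prod.fst ⁻¹' stdSimplex ℝ Y ∩ {p | expScale α W p.2 ≤ expDiv α W p.1} := by
    ext ⟨Q, d⟩
    exact and_congr_right fun hQ => dA_le_coe_iff hα hW hQ.1 d
  rw [hepi]
  exact ((isClosed_stdSimplex ℝ Y).preimage continuous_fst).inter
    (isClosed_le (continuous_expScale.comp continuous_snd)
      ((continuous_expDiv hα hW).comp continuous_fst))

end Divergence

lemma alCap_eq_iSup_iInf {X Y : Type*} [Fintype X] [Fintype Y] {l : ℕ} (α : ℝ)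
    (W : X → Y → ℝ) (ρ : X → Fin l → ℝ) (lam : Fin l → ℝ) :
    alCap α W ρ lam = ⨆ P ∈ stdSimplex ℝ X, ⨅ Q ∈ stdSimplex ℝ Y,
      ∑ x, (P x : EReal) * (dA α (W x) Q - ((∑ i, lam i * ρ x i : ℝ) : EReal)) := by
  refine iSup_congr fun P => iSup_congr fun hP => ?_
  have hcost : ∑ i, lam i * ∑ x, P x * ρ x i = ∑ x, P x * ∑ i, lam i * ρ x i := by
    simp only [mul_sum]
    rw [sum_comm]
    exact sum_congr rfl fun x _ => sum_congr rfl fun i _ => by ring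
  rw [aInfo, hcost, EReal.biInf_sub_coe]
  exact iInf_congr fun Q => iInf_congr fun _ => (EReal.sum_coe_mul_sub_coe hP.1 _ _).symm

theorem alCap_eq_alRad_general {X Y : Type*} [Fintype X] [Fintype Y]
    [Nonempty Y] {l : ℕ}
    (α : ℝ) (hα : α ∈ Set.Ioc (0 : ℝ) 1)
    (W : X → Y → ℝ) (hW : ∀ x, IsPMF (W x))
    (ρ : X → Fin l → ℝ)
    (lam : Fin l → ℝ) :
    alCap α W ρ lam =
      ⨅ Q ∈ {Q : Y → ℝ | IsPMF Q},
        ⨆ x : X, (dA α (W x) Q - (((∑ i, lam i * ρ x i) : ℝ) : EReal)) := by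
  set U := (stdSimplex.barycenter : stdSimplex ℝ Y).1 with hU
  have hUpos : ∀ y, 0 < U y := fun y => by
    rw [hU, stdSimplex.barycenter_apply]
    positivity
  have hfin : ∀ x, ∀ Q ∈ stdSimplex ℝ Y, ∀ ε ∈ Ioc (0 : ℝ) 1,
      dA α (W x) ((1 - ε) • Q + ε • U) ≠ ⊤ := fun x Q hQ ε hε =>
    dA_ne_top_of_pos (hW x) fun y => add_pos_of_nonneg_of_pos
      (mul_nonneg (sub_nonneg.2 hε.2) (hQ.1 y)) (mul_pos hε.1 (hUpos y))
  rw [alCap_eq_iSup_iInf]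
  refine iSup_iInf_sum_eq_iInf_iSup (isCompact_stdSimplex ℝ Y) (convex_stdSimplex ℝ Y)
    (fun x Q => EReal.sub_coe_ne_bot (dA_ne_bot α (W x) Q) _) (fun x => ?_) (fun x => ?_)
    stdSimplex.barycenter.2 fun x Q hQ ε hε => EReal.sub_coe_ne_top (hfin x Q hQ ε hε) _
  · rw [epigraphOn_sub_coe]
    exact (convex_epigraphOn_dA (Ioc_subset_Icc_self hα) (hW x).1).translate_preimage_right _
  · rw [epigraphOn_sub_coe]
    exact (isClosed_epigraphOn_dA hα.2 (hW x).1).preimage (by fun_prop)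

/-- the A-L capacity equals the A-L radius. -/
theorem alCap_eq_alRad {X Y : Type*} [Fintype X] [Fintype Y]
    [Nonempty X] [Nonempty Y] {l : ℕ} (hl : 0 < l)
    (α : ℝ) (hα : α ∈ Set.Ioc (0 : ℝ) 1)
    (W : X → Y → ℝ) (hW : ∀ x, IsPMF (W x))
    (ρ : X → Fin l → ℝ) (hρ : ∀ x i, 0 ≤ ρ x i)
    (lam : Fin l → ℝ) (hlam : ∀ i, 0 ≤ lam i) :
    alCap α W ρ lam =
      ⨅ Q ∈ {Q : Y → ℝ | IsPMF Q},
        ⨆ x : X, (dA α (W x) Q - (((∑ i, lam i * ρ x i) : ℝ) : EReal)) :=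
  alCap_eq_alRad_general α hα W hW ρ lam
end
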